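/- Let α be a composition and let γ ∈ C_2 = {(1^{e_1}, 2, 1^{e_2}, …, 2, 1^{e_k}) : k ≥ 0, e_i ≥ 1 for 1 ≤ i ≤ k−1, e_k ≥ 0} (which includes the empty composition). Then there is a bijection between standard composition tableaux of shape α and those of shape α·γ under which an SCT of shape α with descent composition β corresponds to an SCT of shape α·γ with descent composition β·γ; in particular d_{(α·γ)(β·γ)} = d_{αβ} for all β, and every SCT of shape α·γ has descent composition of the form β·γ. -/

import Mathlib

/-- `SCTChain α U`: the filling `U` of the diagram of the composition `α`
(cells `0`-indexed, rows numbered from the top) arises from a saturated chain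
in the poset `L_C` of compositions, where at each cover step either a new
part `1` is prepended or the leftmost part of a given size is increased by
`1`, and the cell created at the step reaching a composition of size `s` is
filled with `s`. -/
inductive SCTChain : List ℕ → ((ℕ × ℕ) → ℕ) → Prop
  | nil : SCTChain [] (fun _ => 0)
  | prepend {β : List ℕ} {U : (ℕ × ℕ) → ℕ} (h : SCTChain β U) :
      SCTChain (1 :: β)
        (fun c => if c = (0, 0) then β.sum + 1
          else if c.1 = 0 then 0 else U (c.1 - 1, c.2))
  | grow {β : List ℕ} {U : (ℕ × ℕ) → ℕ} (h : SCTChain β U) (i : ℕ)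
      (hi : i < β.length) (hleft : ∀ j < i, β.getD j 0 ≠ β.getD i 0) :
      SCTChain (β.set i (β.getD i 0 + 1))
        (fun c => if c = (i, β.getD i 0) then β.sum + 1 else U c)

/-- `T` is a standard composition tableau of shape `α ⊨ n`: the filling of
the diagram of `α` obtained from a saturated chain
`∅ = α^{n+1} ⋖ ⋯ ⋖ α^1 = α` in `L_C` by placing entry `i` in the cell in
which `α^i` differs from `α^{i+1}` (so the cell created at the step reaching
size `s` receives the entry `n + 1 - s`); entries are `0` off the diagram. -/

def IsSCT (α : List ℕ) (T : (ℕ × ℕ) → ℕ) : Prop :=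
  ∃ U, SCTChain α U ∧ T = fun c => if U c = 0 then 0 else α.sum + 1 - U c

/-- The descent set of a standard composition tableau: those `i` such that
the entry `i+1` lies in a cell weakly to the right of the cell containing
`i`. -/

def desC (T : (ℕ × ℕ) → ℕ) : Set ℕ :=
  {i | 0 < i ∧ ∃ p q : ℕ × ℕ, T p = i ∧ T q = i + 1 ∧ p.2 ≤ q.2}

/-- `set(α) = {α₁, α₁+α₂, …, α₁+⋯+α_{ℓ(α)-1}}`, the subset of `[n-1]`
associated to a composition `α ⊨ n`; `com(T) = β` iff `desC T = compToSet β`. -/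

def compToSet (α : List ℕ) : Set ℕ :=
  {s | ∃ i, 0 < i ∧ i < α.length ∧ s = (α.take i).sum}

/-- The quasisymmetric Schur function `S_α` is F-multiplicity free iff all
standard composition tableaux of shape `α` have pairwise distinct descent
sets. -/

def FmfSCT (α : List ℕ) : Prop :=
  ∀ T T', IsSCT α T → IsSCT α T' → desC T = desC T' → T = T'

/-- Membership in the set
`C₂ = {(1^{e₁}, 2, 1^{e₂}, …, 2, 1^{e_k}) : k ≥ 0, eᵢ ≥ 1 for i < k, e_k ≥ 0}`
of compositions (including the empty composition). -/
inductive InC2 : List ℕ → Prop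
  | nil : InC2 []
  | one {γ : List ℕ} : InC2 γ → InC2 (1 :: γ)
  | one_two {γ : List ℕ} : InC2 γ → InC2 (1 :: 2 :: γ)

/-
An SCT of shape `α·γ` is read off a saturated chain in `L_C`. If every part `γ_k ≥ 2` of `γ` is
preceded in `γ` by a part `γ_k - 1`, as happens for the blocks `(1)` and `(1,2)`, then no cover
step can ever grow a row of `γ`: the leftmost part of size `γ_k - 1` always lies higher up. Hence
every chain of `α·γ` first builds `γ` and then builds `α` above it, i.e. an SCT of shape `α·γ` is
an SCT of shape `α` stacked above an SCT of shape `γ` whose entries are shifted by `|α|`. The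
descents of a stacked tableau are those of the two pieces together with `|α|`, since `|α|` lies in
the first column of the upper piece. The blocks `(1)` and `(1,2)` have a unique SCT, with descent
sets `∅` and `{1}`, and `C₂` is generated from `∅` by appending these blocks.
-/

namespace List

variable {α : Type*}

theorem getD_set_self {l : List α} {i : ℕ} (x d : α) (hi : i < l.length) :
    (l.set i x).getD i d = x := by
  simp [hi]

theorem getD_set_of_ne {l : List α} {i j : ℕ} (x d : α) (h : i ≠ j) :
    (l.set i x).getD j d = l.getD j d := by
  simp [h]

theorem set_getD_self (l : List α) (i : ℕ) (d : α) : l.set i (l.getD i d) = l := by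
  apply List.ext_getElem?
  grind

theorem sum_set_getD_succ {l : List ℕ} {i : ℕ} (hi : i < l.length) :
    (l.set i (l.getD i 0 + 1)).sum = l.sum + 1 := by
  induction l generalizing i with
  | nil => simp at hi
  | cons a l ih => cases i <;> simp_all <;> omega

theorem set_getD_succ_append {l₁ : List ℕ} {i : ℕ} (hi : i < l₁.length) (l₂ : List ℕ) :
    (l₁ ++ l₂).set i ((l₁ ++ l₂).getD i 0 + 1) = l₁.set i (l₁.getD i 0 + 1) ++ l₂ := by
  rw [getD_append _ _ _ _ hi, set_append_left _ _ hi]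

theorem exists_append_of_set_getD_succ_eq {l l₁ l₂ : List ℕ} {i : ℕ} (hi : i < l₁.length)
    (h : l.set i (l.getD i 0 + 1) = l₁ ++ l₂) :
    ∃ l', l = l' ++ l₂ ∧ l₁ = l'.set i (l'.getD i 0 + 1) ∧ i < l'.length := by
  have hil : i < l.length := by
    have := congrArg length h
    simp only [length_set, length_append] at this
    omega
  have hl₁ : l₁.getD i 0 = l.getD i 0 + 1 := by
    rw [← getD_append _ l₂ _ _ hi, ← h, getD_set_self _ _ hil]
  refine ⟨l₁.set i (l.getD i 0), ?_, ?_, by simpa using hi⟩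
  · rw [← set_append_left _ _ hi, ← h, set_set, set_getD_self]
  · rw [getD_set_self _ _ hi, set_set, ← hl₁, set_getD_self]

end List

-- The labellings built by the two constructors `SCTChain.prepend` and `SCTChain.grow`.
def prependLabels (β : List ℕ) (U : ℕ × ℕ → ℕ) : ℕ × ℕ → ℕ := fun c =>
  if c = (0, 0) then β.sum + 1 else if c.1 = 0 then 0 else U (c.1 - 1, c.2)

def growLabels (β : List ℕ) (i : ℕ) (U : ℕ × ℕ → ℕ) : ℕ × ℕ → ℕ := fun c =>
  if c = (i, β.getD i 0) then β.sum + 1 else U c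

namespace SCTChain

variable {δ : List ℕ} {U : ℕ × ℕ → ℕ}

theorem pos (h : SCTChain δ U) : ∀ x ∈ δ, 0 < x := by
  induction h with
  | nil => simp
  | prepend _ ih => simpa using ih
  | grow _ i _ _ ih =>
    intro x hx
    rcases List.mem_or_eq_of_mem_set hx with hx | rfl
    · exact ih x hx
    · omega

theorem support (h : SCTChain δ U) {c : ℕ × ℕ} (hc : U c ≠ 0) :
    c.1 < δ.length ∧ c.2 < δ.getD c.1 0 := by
  induction h generalizing c with
  | nil => simp at hc
  | @prepend β U _ ih =>
    obtain ⟨_ | r, k⟩ := c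
    · by_cases hk : k = 0 <;> simp_all
    · simpa using ih (c := (r, k)) (by simpa using hc)
  | @grow β U _ i hi _ ih =>
    by_cases hnew : c = (i, β.getD i 0)
    · subst hnew
      simp [hi]
    · obtain ⟨h1, h2⟩ := ih (by simpa only [if_neg hnew] using hc)
      refine ⟨by simpa using h1, ?_⟩
      by_cases hr : c.1 = i
      · have : (β.set i (β.getD i 0 + 1)).getD i 0 = β.getD i 0 + 1 := by simp [hi]
        rw [hr] at h2 ⊢
        omega
      · have : (β.set i (β.getD i 0 + 1)).getD c.1 0 = β.getD c.1 0 := by simp [Ne.symm hr]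
        rwa [this]

theorem le_sum (h : SCTChain δ U) (c : ℕ × ℕ) : U c ≤ δ.sum := by
  induction h generalizing c with
  | nil => simp
  | @prepend β U _ ih =>
    have := ih (c.1 - 1, c.2)
    simp only [List.sum_cons]
    split_ifs <;> omega
  | @grow β U _ i hi _ ih =>
    have := ih c
    rw [List.sum_set_getD_succ hi]
    dsimp only
    split_ifs <;> omega

theorem exists_eq_sum (h : SCTChain δ U) : ∃ c, U c = δ.sum := by
  cases h with
  | nil => exact ⟨(0, 0), rfl⟩
  | prepend => exact ⟨(0, 0), by simp [add_comm]⟩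
  | @grow β _ _ i hi => exact ⟨(i, β.getD i 0), by simp only [if_pos, List.sum_set_getD_succ hi]⟩

theorem exists_col_zero_eq_one (h : SCTChain δ U) (hδ : δ ≠ []) : ∃ r, U (r, 0) = 1 := by
  induction h with
  | nil => exact absurd rfl hδ
  | @prepend β U _ ih =>
    rcases eq_or_ne β [] with rfl | hβ
    · exact ⟨0, by simp⟩
    · obtain ⟨r, hr⟩ := ih hβ
      exact ⟨r + 1, by simpa using hr⟩
  | @grow β U hU i hi _ ih =>
    obtain ⟨r, hr⟩ := ih (List.ne_nil_of_length_pos (by omega))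
    have hnew : (r, 0) ≠ (i, β.getD i 0) := by
      intro heq
      have := (hU.support (c := (r, 0)) (by omega)).2
      rw [heq] at this
      exact lt_irrefl _ this
    exact ⟨r, by simp only [if_neg hnew, hr]⟩

theorem getD_pos (h : SCTChain δ U) {i : ℕ} (hi : i < δ.length) : 0 < δ.getD i 0 :=
  h.pos _ (by rw [List.getD_eq_getElem _ _ hi]; exact List.getElem_mem hi)

theorem eq_zero_of_nil (h : SCTChain [] U) : U = fun _ => 0 := by
  funext c
  by_contra hc
  exact absurd (h.support hc).1 (Nat.not_lt_zero _)

end SCTChain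

def stackLabels (α γ : List ℕ) (U V : ℕ × ℕ → ℕ) : ℕ × ℕ → ℕ := fun c =>
  if α.length ≤ c.1 then V (c.1 - α.length, c.2) else if U c = 0 then 0 else U c + γ.sum

theorem stackLabels_nil (γ : List ℕ) (V : ℕ × ℕ → ℕ) :
    stackLabels [] γ (fun _ => 0) V = V := by
  funext c
  simp [stackLabels]

theorem stackLabels_prepend (α γ : List ℕ) (U V : ℕ × ℕ → ℕ) :
    stackLabels (1 :: α) γ (prependLabels α U) V =
      prependLabels (α ++ γ) (stackLabels α γ U V) := by
  funext ⟨r, k⟩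
  rcases r with _ | r
  · simp only [stackLabels, prependLabels, Prod.mk.injEq, List.sum_append, List.length_cons]
    split_ifs <;> omega
  · simp [stackLabels, prependLabels]

theorem stackLabels_grow {α : List ℕ} {i : ℕ} (hi : i < α.length) (γ : List ℕ)
    (U V : ℕ × ℕ → ℕ) :
    stackLabels (α.set i (α.getD i 0 + 1)) γ (growLabels α i U) V =
      growLabels (α ++ γ) i (stackLabels α γ U V) := by
  funext c
  have hget : (α ++ γ).getD i 0 = α.getD i 0 := List.getD_append _ _ _ _ hi
  by_cases hc : c = (i, α.getD i 0)
  · subst hc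
    simp only [stackLabels, growLabels, hget, if_pos, List.length_set, List.sum_append,
      if_neg (not_le.2 hi), if_neg (Nat.succ_ne_zero _)]
    omega
  · simp only [stackLabels, growLabels, hget, if_neg hc, List.length_set]

theorem SCTChain.append {α γ : List ℕ} {U V : ℕ × ℕ → ℕ} (hU : SCTChain α U)
    (hV : SCTChain γ V) : SCTChain (α ++ γ) (stackLabels α γ U V) := by
  induction hU with
  | nil => rwa [stackLabels_nil]
  | @prepend β U _ ih =>
    change SCTChain (1 :: (β ++ γ)) (stackLabels (1 :: β) γ (prependLabels β U) V)
    rw [stackLabels_prepend]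
    exact ih.prepend
  | @grow β U _ i hi hleft ih =>
    change SCTChain _ (stackLabels _ γ (growLabels β i U) V)
    rw [stackLabels_grow hi, ← List.set_getD_succ_append hi]
    refine ih.grow i (by rw [List.length_append]; omega) fun j hj => ?_
    rw [List.getD_append _ _ _ _ hi, List.getD_append _ _ _ _ (by omega)]
    exact hleft j hj

def GrowthBlocked (γ : List ℕ) : Prop :=
  ∀ k < γ.length, 2 ≤ γ.getD k 0 → ∃ j < k, γ.getD j 0 + 1 = γ.getD k 0

theorem growthBlocked_one : GrowthBlocked [1] := by
  unfold GrowthBlocked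
  decide

theorem growthBlocked_one_two : GrowthBlocked [1, 2] := by
  unfold GrowthBlocked
  decide

theorem GrowthBlocked.lt_length_of_set_eq_append {α β γ : List ℕ} {i : ℕ}
    (hγ : GrowthBlocked γ) (hpos : 0 < β.getD i 0)
    (hleft : ∀ j < i, β.getD j 0 ≠ β.getD i 0)
    (h : β.set i (β.getD i 0 + 1) = α ++ γ) : i < α.length := by
  by_contra! hle
  have hiβ : i < β.length := by
    by_contra hβ
    rw [List.getD_eq_default _ _ (not_lt.1 hβ)] at hpos
    exact lt_irrefl 0 hpos
  have hlen : β.length = α.length + γ.length := by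
    simpa using congrArg List.length h
  have hget : ∀ j, (β.set i (β.getD i 0 + 1)).getD (α.length + j) 0 = γ.getD j 0 := by
    intro j
    rw [h, List.getD_append_right _ _ _ _ (by omega), Nat.add_sub_cancel_left]
  have hk := hget (i - α.length)
  rw [Nat.add_sub_cancel' hle, List.getD_set_self _ _ hiβ] at hk
  obtain ⟨j, hj, hjk⟩ := hγ (i - α.length) (by omega) (by omega)
  have hj' := hget j
  rw [List.getD_set_of_ne _ _ (by omega)] at hj'
  exact hleft (α.length + j) (by omega) (by omega)

theorem SCTChain.exists_stackLabels {α γ : List ℕ} {W : ℕ × ℕ → ℕ} (hγ : GrowthBlocked γ)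
    (h : SCTChain (α ++ γ) W) :
    ∃ U V, SCTChain α U ∧ SCTChain γ V ∧ W = stackLabels α γ U V := by
  generalize hδ : α ++ γ = δ at h
  induction h generalizing α with
  | nil =>
    obtain ⟨rfl, rfl⟩ := List.append_eq_nil_iff.1 hδ
    exact ⟨_, _, .nil, .nil, (stackLabels_nil _ _).symm⟩
  | @prepend β U hU ih =>
    rcases List.append_eq_cons_iff.1 hδ with ⟨rfl, rfl⟩ | ⟨α₀, rfl, rfl⟩
    · exact ⟨_, _, .nil, hU.prepend, (stackLabels_nil _ _).symm⟩
    · obtain ⟨U₀, V, hU₀, hV, rfl⟩ := ih rfl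
      exact ⟨_, V, hU₀.prepend, hV, (stackLabels_prepend α₀ γ U₀ V).symm⟩
  | @grow β U hU i hi hleft ih =>
    have hiα := hγ.lt_length_of_set_eq_append (hU.getD_pos hi) hleft hδ.symm
    obtain ⟨α', rfl, rfl, hi'⟩ := List.exists_append_of_set_getD_succ_eq hiα hδ.symm
    obtain ⟨U₀, V, hU₀, hV, rfl⟩ := ih rfl
    refine ⟨_, V, hU₀.grow i hi' fun j hj => ?_, hV, (stackLabels_grow hi' γ U₀ V).symm⟩
    have := hleft j hj
    rwa [List.getD_append _ _ _ _ hi', List.getD_append _ _ _ _ (by omega)] at this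

theorem SCTChain.exists_eq_prependLabels {δ : List ℕ} {W : ℕ × ℕ → ℕ} (hδ : GrowthBlocked δ)
    (hne : δ ≠ []) (h : SCTChain δ W) :
    ∃ β V, δ = 1 :: β ∧ SCTChain β V ∧ W = prependLabels β V := by
  cases h with
  | nil => exact absurd rfl hne
  | prepend hV => exact ⟨_, _, rfl, hV, rfl⟩
  | grow hU i hi hleft =>
    exact absurd (hδ.lt_length_of_set_eq_append (α := []) (hU.getD_pos hi) hleft rfl)
      (Nat.not_lt_zero _)

def rowLabels (a : ℕ) : ℕ × ℕ → ℕ := fun c => if c.1 = 0 ∧ c.2 < a then c.2 + 1 else 0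

theorem prependLabels_nil : prependLabels [] (fun _ => 0) = rowLabels 1 := by
  funext ⟨r, k⟩
  by_cases hr : r = 0 <;> by_cases hk : k = 0 <;> simp [prependLabels, rowLabels, hr, hk]

theorem growLabels_rowLabels (a : ℕ) : growLabels [a] 0 (rowLabels a) = rowLabels (a + 1) := by
  funext ⟨r, k⟩
  simp only [growLabels, rowLabels, List.getD_cons_zero, List.sum_singleton, Prod.mk.injEq]
  split_ifs <;> omega

theorem sctChain_rowLabels {a : ℕ} (ha : 0 < a) : SCTChain [a] (rowLabels a) := by
  induction a, ha using Nat.le_induction with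
  | base =>
    rw [← prependLabels_nil]
    exact SCTChain.nil.prepend
  | succ a _ ih =>
    rw [← growLabels_rowLabels]
    exact ih.grow 0 (by simp) (by simp)

theorem SCTChain.eq_rowLabels {a : ℕ} {U : ℕ × ℕ → ℕ} (h : SCTChain [a] U) :
    U = rowLabels a := by
  generalize hδ : [a] = δ at h
  induction h generalizing a with
  | nil => simp at hδ
  | @prepend β U hU _ =>
    obtain ⟨rfl, rfl⟩ := List.cons_eq_cons.1 hδ
    rw [hU.eq_zero_of_nil]
    exact prependLabels_nil
  | @grow β U hU i hi _ ih =>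
    obtain ⟨b, rfl⟩ := List.length_eq_one_iff.1 (by simpa using congrArg List.length hδ.symm)
    obtain rfl : i = 0 := by simpa using hi
    obtain rfl : a = b + 1 := by simpa using hδ
    rw [ih rfl]
    exact growLabels_rowLabels b

theorem SCTChain.eq_of_one_two {W : ℕ × ℕ → ℕ} (h : SCTChain [1, 2] W) :
    W = prependLabels [2] (rowLabels 2) := by
  obtain ⟨β, V, hβ, hV, rfl⟩ := h.exists_eq_prependLabels growthBlocked_one_two (by simp)
  obtain rfl : β = [2] := (List.cons_eq_cons.1 hβ).2.symm
  rw [hV.eq_rowLabels]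

def toTableau (n : ℕ) (U : ℕ × ℕ → ℕ) : ℕ × ℕ → ℕ := fun c =>
  if U c = 0 then 0 else n + 1 - U c

theorem isSCT_iff {α : List ℕ} {T : ℕ × ℕ → ℕ} :
    IsSCT α T ↔ ∃ U, SCTChain α U ∧ T = toTableau α.sum U :=
  Iff.rfl

def stackTableau (α : List ℕ) (T S : ℕ × ℕ → ℕ) : ℕ × ℕ → ℕ := fun c =>
  if α.length ≤ c.1 then
    if S (c.1 - α.length, c.2) = 0 then 0 else S (c.1 - α.length, c.2) + α.sum
  else T c

theorem toTableau_stackLabels (α : List ℕ) {γ : List ℕ} (U : ℕ × ℕ → ℕ) {V : ℕ × ℕ → ℕ}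
    (hV : ∀ c, V c ≤ γ.sum) :
    toTableau (α ++ γ).sum (stackLabels α γ U V) =
      stackTableau α (toTableau α.sum U) (toTableau γ.sum V) := by
  funext c
  have := hV (c.1 - α.length, c.2)
  simp only [toTableau, stackLabels, stackTableau, List.sum_append]
  split_ifs <;> omega

namespace IsSCT

variable {α γ : List ℕ} {T S : ℕ × ℕ → ℕ}

theorem stack (hT : IsSCT α T) (hS : IsSCT γ S) : IsSCT (α ++ γ) (stackTableau α T S) := by
  obtain ⟨U, hU, rfl⟩ := hT
  obtain ⟨V, hV, rfl⟩ := hS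
  exact ⟨_, hU.append hV, (toTableau_stackLabels α U hV.le_sum).symm⟩

theorem exists_stack (hγ : GrowthBlocked γ) (h : IsSCT (α ++ γ) T) :
    ∃ T₀ S, IsSCT α T₀ ∧ IsSCT γ S ∧ T = stackTableau α T₀ S := by
  obtain ⟨W, hW, rfl⟩ := h
  obtain ⟨U, V, hU, hV, rfl⟩ := hW.exists_stackLabels hγ
  exact ⟨_, _, ⟨U, hU, rfl⟩, ⟨V, hV, rfl⟩, toTableau_stackLabels α U hV.le_sum⟩

theorem eq_zero_of_length_le (h : IsSCT α T) {c : ℕ × ℕ} (hc : α.length ≤ c.1) : T c = 0 := by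
  obtain ⟨U, hU, rfl⟩ := h
  by_cases hUc : U c = 0
  · simp [hUc]
  · exact absurd (hU.support hUc).1 (not_lt.2 hc)

theorem le_sum (h : IsSCT α T) (c : ℕ × ℕ) : T c ≤ α.sum := by
  obtain ⟨U, hU, rfl⟩ := h
  dsimp only
  split_ifs <;> omega

theorem exists_col_zero_eq_sum (h : IsSCT α T) (hα : 0 < α.sum) : ∃ r, T (r, 0) = α.sum := by
  obtain ⟨U, hU, rfl⟩ := h
  obtain ⟨r, hr⟩ := hU.exists_col_zero_eq_one (by rintro rfl; simp at hα)
  exact ⟨r, by simp [hr]⟩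

theorem exists_eq_one (h : IsSCT α T) (hα : α ≠ []) : ∃ c, T c = 1 := by
  obtain ⟨U, hU, rfl⟩ := h
  obtain ⟨c, hc⟩ := hU.exists_eq_sum
  obtain ⟨r, hr⟩ := hU.exists_col_zero_eq_one hα
  have hpos : 0 < α.sum := (hU.le_sum (r, 0)).trans_lt' (by omega)
  exact ⟨c, by simp [hc, hpos.ne']⟩

theorem eq_of_forall_chain_eq {U₀ : ℕ × ℕ → ℕ} (hU₀ : ∀ U, SCTChain α U → U = U₀) {T' : ℕ × ℕ → ℕ}
    (hT : IsSCT α T) (hT' : IsSCT α T') : T = T' := by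
  obtain ⟨U, hU, rfl⟩ := hT
  obtain ⟨U', hU', rfl⟩ := hT'
  rw [hU₀ U hU, hU₀ U' hU']

end IsSCT

theorem stackTableau_eq_iff {α : List ℕ} {T S : ℕ × ℕ → ℕ} {c : ℕ × ℕ} {v : ℕ} (hv : 0 < v) :
    stackTableau α T S c = v ↔ (c.1 < α.length ∧ T c = v) ∨
      (α.length ≤ c.1 ∧ S (c.1 - α.length, c.2) ≠ 0 ∧ S (c.1 - α.length, c.2) + α.sum = v) := by
  simp only [stackTableau]
  split_ifs <;> omega

theorem stackTableau_shift_eq {α : List ℕ} {T S : ℕ × ℕ → ℕ} {r k v : ℕ} (hv : 0 < v)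
    (h : S (r, k) = v) : stackTableau α T S (r + α.length, k) = v + α.sum := by
  rw [stackTableau_eq_iff (by omega)]
  simp [h, hv.ne']

theorem IsSCT.stackTableau_eq {α : List ℕ} {T S : ℕ × ℕ → ℕ} (hT : IsSCT α T) {c : ℕ × ℕ}
    {v : ℕ} (hv : 0 < v) (h : T c = v) : stackTableau α T S c = v := by
  have hc : c.1 < α.length := by
    by_contra! hc
    rw [hT.eq_zero_of_length_le hc] at h
    omega
  exact (stackTableau_eq_iff hv).2 (Or.inl ⟨hc, h⟩)

theorem desC_stackTableau {α γ : List ℕ} {T S : ℕ × ℕ → ℕ} (hT : IsSCT α T) (hS : IsSCT γ S)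
    (hγ : γ ≠ []) :
    desC (stackTableau α T S) = desC T ∪ {s | 0 < s ∧ s = α.sum} ∪ (α.sum + ·) '' desC S := by
  ext i
  simp only [desC, Set.mem_union, Set.mem_ofPred_eq, Set.mem_image]
  constructor
  · rintro ⟨hi, p, q, hp, hq, hpq⟩
    rw [stackTableau_eq_iff hi] at hp
    rw [stackTableau_eq_iff (by omega)] at hq
    have hTp := hT.le_sum p
    have hTq := hT.le_sum q
    rcases hp with ⟨-, hp⟩ | ⟨-, hp0, hp⟩ <;> rcases hq with ⟨-, hq⟩ | ⟨-, hq0, hq⟩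
    · exact Or.inl (Or.inl ⟨hi, p, q, hp, hq, hpq⟩)
    · exact Or.inl (Or.inr ⟨hi, by omega⟩)
    · omega
    · exact Or.inr ⟨i - α.sum, ⟨by omega, (p.1 - α.length, p.2), (q.1 - α.length, q.2),
        by omega, by omega, hpq⟩, by omega⟩
  · rintro ((⟨hi, p, q, hp, hq, hpq⟩ | ⟨hi, rfl⟩) | ⟨d, ⟨hd, p, q, hp, hq, hpq⟩, rfl⟩)
    · exact ⟨hi, p, q, hT.stackTableau_eq hi hp, hT.stackTableau_eq (by omega) hq, hpq⟩
    · obtain ⟨r, hr⟩ := hT.exists_col_zero_eq_sum hi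
      obtain ⟨c, hc⟩ := hS.exists_eq_one hγ
      refine ⟨hi, (r, 0), (c.1 + α.length, c.2), hT.stackTableau_eq hi hr, ?_, Nat.zero_le _⟩
      rw [stackTableau_shift_eq one_pos hc, add_comm]
    · refine ⟨by omega, (p.1 + α.length, p.2), (q.1 + α.length, q.2), ?_, ?_, hpq⟩
      · rw [stackTableau_shift_eq hd hp, add_comm]
      · rw [stackTableau_shift_eq (by omega) hq]
        omega

def rowTableau (a : ℕ) : ℕ × ℕ → ℕ := fun c => if c.1 = 0 ∧ c.2 < a then a - c.2 else 0

theorem toTableau_rowLabels (a : ℕ) : toTableau a (rowLabels a) = rowTableau a := by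
  funext c
  by_cases hc : c.1 = 0 ∧ c.2 < a <;> simp [toTableau, rowLabels, rowTableau, hc]

theorem isSCT_rowTableau {a : ℕ} (ha : 0 < a) : IsSCT [a] (rowTableau a) :=
  isSCT_iff.2 ⟨_, sctChain_rowLabels ha, by rw [List.sum_singleton, toTableau_rowLabels]⟩

theorem IsSCT.eq_rowTableau {a : ℕ} {T : ℕ × ℕ → ℕ} (h : IsSCT [a] T) : T = rowTableau a := by
  obtain ⟨U, hU, rfl⟩ := isSCT_iff.1 h
  rw [hU.eq_rowLabels, List.sum_singleton, toTableau_rowLabels]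

theorem desC_rowTableau (a : ℕ) : desC (rowTableau a) = ∅ := by
  refine Set.eq_empty_of_forall_notMem fun i ⟨hi, p, q, hp, hq, hpq⟩ => ?_
  simp only [rowTableau] at hp hq
  split_ifs at hp hq <;> omega

theorem IsSCT.eq_stackTableau_one_two {T : ℕ × ℕ → ℕ} (h : IsSCT [1, 2] T) :
    T = stackTableau [1] (rowTableau 1) (rowTableau 2) :=
  h.eq_of_forall_chain_eq (fun _ => SCTChain.eq_of_one_two)
    ((isSCT_rowTableau one_pos).stack (isSCT_rowTableau two_pos))

theorem desC_stackTableau_one_two :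
    desC (stackTableau [1] (rowTableau 1) (rowTableau 2)) = {1} := by
  rw [desC_stackTableau (isSCT_rowTableau one_pos) (isSCT_rowTableau two_pos) (by simp),
    desC_rowTableau, desC_rowTableau]
  ext s
  simp only [Set.empty_union, Set.image_empty, Set.union_empty, Set.mem_ofPred_eq,
    Set.mem_singleton_iff, List.sum_singleton]
  omega

theorem IsSCT.eq_of_stackTableau_eq {α : List ℕ} {T T' S S' : ℕ × ℕ → ℕ} (hT : IsSCT α T)
    (hT' : IsSCT α T') (h : stackTableau α T S = stackTableau α T' S') : T = T' := by
  funext c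
  by_cases hc : c.1 < α.length
  · simpa [stackTableau, not_le.2 hc] using congrFun h c
  · rw [hT.eq_zero_of_length_le (not_lt.1 hc), hT'.eq_zero_of_length_le (not_lt.1 hc)]

theorem exists_equiv_stackTableau {α γ : List ℕ} {S : ℕ × ℕ → ℕ} (hγ : GrowthBlocked γ)
    (hS : IsSCT γ S) (huniq : ∀ S', IsSCT γ S' → S' = S) :
    ∃ e : {T // IsSCT α T} ≃ {T // IsSCT (α ++ γ) T}, ∀ T, (e T).1 = stackTableau α T.1 S := by
  refine ⟨Equiv.ofBijective (fun T => ⟨stackTableau α T.1 S, T.2.stack hS⟩)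
    ⟨fun T T' h => Subtype.ext (T.2.eq_of_stackTableau_eq T'.2 (congrArg Subtype.val h)),
      fun T => ?_⟩, fun _ => rfl⟩
  obtain ⟨T₀, S', hT₀, hS', hT⟩ := T.2.exists_stack hγ
  exact ⟨⟨T₀, hT₀⟩, Subtype.ext (by rw [hT, huniq S' hS'])⟩

def HasSCTAppendEquiv (α γ : List ℕ) : Prop :=
  ∃ e : {T // IsSCT α T} ≃ {T // IsSCT (α ++ γ) T},
    ∀ T, desC (e T).1 = desC T.1 ∪ {s | 0 < s ∧ ∃ i < γ.length, s = α.sum + (γ.take i).sum}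

theorem setOf_prefix_sums_append (n : ℕ) (δ γ : List ℕ) :
    {s | 0 < s ∧ ∃ i < δ.length, s = n + (δ.take i).sum} ∪
        {s | 0 < s ∧ ∃ i < γ.length, s = n + δ.sum + (γ.take i).sum} =
      {s | 0 < s ∧ ∃ i < (δ ++ γ).length, s = n + ((δ ++ γ).take i).sum} := by
  ext s
  simp only [Set.mem_union, Set.mem_ofPred_eq, List.length_append]
  constructor
  · rintro (⟨hs, i, hi, rfl⟩ | ⟨hs, i, hi, rfl⟩)
    · exact ⟨hs, i, by omega, by rw [List.take_append_of_le_length hi.le]⟩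
    · refine ⟨hs, δ.length + i, by omega, ?_⟩
      rw [List.take_length_add_append, List.sum_append, add_assoc]
  · rintro ⟨hs, i, hi, rfl⟩
    by_cases hiδ : i < δ.length
    · exact Or.inl ⟨hs, i, hiδ, by rw [List.take_append_of_le_length hiδ.le]⟩
    · refine Or.inr ⟨hs, i - δ.length, by omega, ?_⟩
      obtain ⟨j, rfl⟩ := Nat.exists_eq_add_of_le (not_lt.1 hiδ)
      rw [List.take_length_add_append, List.sum_append, add_assoc, Nat.add_sub_cancel_left]

namespace HasSCTAppendEquiv

theorem nil (α : List ℕ) : HasSCTAppendEquiv α [] := by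
  refine ⟨Equiv.subtypeEquivRight fun T => by rw [List.append_nil], fun T => ?_⟩
  simp

theorem append {α δ γ : List ℕ} (h₁ : HasSCTAppendEquiv α δ)
    (h₂ : HasSCTAppendEquiv (α ++ δ) γ) : HasSCTAppendEquiv α (δ ++ γ) := by
  obtain ⟨e₁, he₁⟩ := h₁
  obtain ⟨e₂, he₂⟩ := h₂
  refine ⟨e₁.trans (e₂.trans (Equiv.subtypeEquivRight fun T => by rw [List.append_assoc])),
    fun T => ?_⟩
  rw [← setOf_prefix_sums_append, ← Set.union_assoc, ← he₁, ← List.sum_append, ← he₂]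
  rfl

theorem one (α : List ℕ) : HasSCTAppendEquiv α [1] := by
  obtain ⟨e, he⟩ := exists_equiv_stackTableau (α := α) growthBlocked_one (isSCT_rowTableau one_pos)
    fun _ => IsSCT.eq_rowTableau
  refine ⟨e, fun T => ?_⟩
  rw [he, desC_stackTableau T.2 (isSCT_rowTableau one_pos) (by simp), desC_rowTableau,
    Set.image_empty, Set.union_empty]
  congr 1
  ext s
  simp

theorem one_two (α : List ℕ) : HasSCTAppendEquiv α [1, 2] := by
  obtain ⟨e, he⟩ := exists_equiv_stackTableau (α := α) growthBlocked_one_two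
    ((isSCT_rowTableau one_pos).stack (isSCT_rowTableau two_pos))
    fun _ => IsSCT.eq_stackTableau_one_two
  refine ⟨e, fun T => ?_⟩
  rw [he, desC_stackTableau T.2 ((isSCT_rowTableau one_pos).stack (isSCT_rowTableau two_pos))
    (by simp), desC_stackTableau_one_two, Set.image_singleton, Set.union_assoc]
  congr 1
  ext s
  simp only [Set.mem_union, Set.mem_singleton_iff, Set.mem_ofPred_eq, List.length_cons,
    List.length_nil]
  constructor
  · rintro (⟨hs, rfl⟩ | rfl)
    · exact ⟨hs, 0, by omega, by simp⟩
    · exact ⟨by omega, 1, by omega, by simp⟩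
  · rintro ⟨hs, i, hi, rfl⟩
    interval_cases i
    · exact Or.inl ⟨hs, by simp⟩
    · exact Or.inr (by simp)

end HasSCTAppendEquiv

theorem sct_append_c2_bijection_general (α γ : List ℕ)
    (hγ : InC2 γ) :
    ∃ e : {T // IsSCT α T} ≃ {T // IsSCT (α ++ γ) T},
      ∀ T, desC (e T).1 = desC T.1 ∪
        {s | 0 < s ∧ ∃ i < γ.length, s = α.sum + (γ.take i).sum} := by
  induction hγ generalizing α with
  | nil => exact HasSCTAppendEquiv.nil α
  | one _ ih => exact (HasSCTAppendEquiv.one α).append (ih _)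
  | one_two _ ih => exact (HasSCTAppendEquiv.one_two α).append (ih _)

/-- For `γ ∈ C₂` there is a bijection between the standard composition
tableaux of shape `α` and those of shape `α·γ`, under which an SCT of shape
`α` with descent composition `β` corresponds to an SCT of shape `α·γ` with
descent composition `β·γ`, i.e. with descent set enlarged by the partial
sums `{|α| + γ₁ + ⋯ + γᵢ : 0 ≤ i < ℓ(γ)}`.  In particular
`d_{(α·γ)(β·γ)} = d_{αβ}` for all `β`, and every SCT of shape `α·γ` has
descent composition of the form `β·γ`. -/
theorem sct_append_c2_bijection (α γ : List ℕ) (hpos : ∀ x ∈ α, 0 < x)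
    (hγ : InC2 γ) :
    ∃ e : {T // IsSCT α T} ≃ {T // IsSCT (α ++ γ) T},
      ∀ T, desC (e T).1 = desC T.1 ∪
        {s | 0 < s ∧ ∃ i < γ.length, s = α.sum + (γ.take i).sum} :=
  sct_append_c2_bijection_general α γ hγ
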